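/- arXiv:2305.09632 — 3 statements merged into one kernel-verified Lean document; each statement's English description precedes it below -/
import Mathlib

section
/- Let W be a finite-dimensional real inner product space, σ̄ ⊆ W a closed convex cone, ℓ : W → ℝ a continuous concave function with ℓ(w₀) > 0 for some w₀ ∈ σ̄, and assume ℓ is positively homogeneous of degree 1. If w* is the unique maximizer of ℓ(w) − ½‖w‖² on σ̄, then w*/‖w*‖ maximizes μ(w) = ℓ(w)/‖w‖ over σ̄ \ {0}, and every maximizer of μ on σ̄ \ {0} is a positive scalar multiple of w*. -/
/-- Let `σ̄ ⊆ W` be a closed convex cone in a finite-dimensional real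
inner product space, and `ℓ : W → ℝ` continuous, concave and positively 1-homogeneous
with `ℓ(w₀) > 0` for some `w₀ ∈ σ̄`. If `w*` is the unique maximizer of
`ℓ(w) − ½‖w‖²` on `σ̄`, then `w*/‖w*‖` maximizes `μ(w) = ℓ(w)/‖w‖` over `σ̄ \ {0}`,
and every maximizer of `μ` on `σ̄ \ {0}` is a positive scalar multiple of `w*`. -/
theorem stmt2 {W : Type*} [NormedAddCommGroup W] [InnerProductSpace ℝ W]
    [FiniteDimensional ℝ W] (s : Set W) (hs_closed : IsClosed s) (hs_conv : Convex ℝ s)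
    (hs_zero : (0 : W) ∈ s) (hs_cone : ∀ w ∈ s, ∀ t : ℝ, 0 < t → t • w ∈ s)
    (ℓ : W → ℝ) (hℓ_cont : Continuous ℓ) (hℓ_conc : ConcaveOn ℝ Set.univ ℓ)
    (hℓ_hom : ∀ (t : ℝ), 0 < t → ∀ w : W, ℓ (t • w) = t * ℓ w)
    (w₀ : W) (hw₀ : w₀ ∈ s) (hℓ_pos : 0 < ℓ w₀)
    (wstar : W) (hwstar_mem : wstar ∈ s)
    (hwstar_max : ∀ v ∈ s, ℓ v - (1 / 2) * ‖v‖ ^ 2 ≤ ℓ wstar - (1 / 2) * ‖wstar‖ ^ 2)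
    (hwstar_uniq : ∀ w ∈ s,
      (∀ v ∈ s, ℓ v - (1 / 2) * ‖v‖ ^ 2 ≤ ℓ w - (1 / 2) * ‖w‖ ^ 2) → w = wstar) :
    (‖wstar‖⁻¹ • wstar ∈ s ∧ ‖wstar‖⁻¹ • wstar ≠ 0 ∧
      ∀ w ∈ s, w ≠ 0 →
        ℓ w / ‖w‖ ≤ ℓ (‖wstar‖⁻¹ • wstar) / ‖‖wstar‖⁻¹ • wstar‖) ∧
    (∀ w ∈ s, w ≠ 0 →
      (∀ v ∈ s, v ≠ 0 → ℓ v / ‖v‖ ≤ ℓ w / ‖w‖) →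
      ∃ t : ℝ, 0 < t ∧ w = t • wstar) := by
  -- F(wstar) > 0
  have hN1 : (0:ℝ) < ‖w₀‖ ^ 2 + 1 := by positivity
  set t₀ : ℝ := ℓ w₀ / (‖w₀‖ ^ 2 + 1) with ht₀def
  have ht₀ : 0 < t₀ := div_pos hℓ_pos hN1
  have ht₀' : t₀ * (‖w₀‖ ^ 2 + 1) = ℓ w₀ := by rw [ht₀def]; field_simp
  have hmem0 : t₀ • w₀ ∈ s := hs_cone w₀ hw₀ t₀ ht₀
  have hn0 : ‖t₀ • w₀‖ = t₀ * ‖w₀‖ := by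
    rw [norm_smul, Real.norm_eq_abs, abs_of_pos ht₀]
  have hF0 : 0 < ℓ (t₀ • w₀) - (1 / 2) * ‖t₀ • w₀‖ ^ 2 := by
    rw [hℓ_hom t₀ ht₀, hn0]
    nlinarith [mul_pos ht₀ ht₀, sq_nonneg ‖w₀‖]
  have hFstar : 0 < ℓ wstar - (1 / 2) * ‖wstar‖ ^ 2 :=
    lt_of_lt_of_le hF0 (hwstar_max _ hmem0)
  -- wstar ≠ 0
  have hℓ0 : ℓ (0 : W) = 0 := by
    have h := hℓ_hom 2 two_pos 0
    simp only [smul_zero] at h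
    linarith
  have hne : wstar ≠ 0 := by
    intro h
    rw [h] at hFstar
    simp [hℓ0] at hFstar
  have hNs : 0 < ‖wstar‖ := norm_pos_iff.mpr hne
  -- ℓ wstar = ‖wstar‖^2
  have hLpos : 0 < ℓ wstar := by nlinarith [sq_nonneg ‖wstar‖]
  have hL : ℓ wstar = ‖wstar‖ ^ 2 := by
    set t : ℝ := ℓ wstar / ‖wstar‖ ^ 2 with htdef
    have ht : 0 < t := div_pos hLpos (by positivity)
    have ht' : t * ‖wstar‖ ^ 2 = ℓ wstar := by rw [htdef]; field_simp
    have h := hwstar_max (t • wstar) (hs_cone wstar hwstar_mem t ht)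
    rw [hℓ_hom t ht, norm_smul, Real.norm_eq_abs, abs_of_pos ht, mul_pow] at h
    nlinarith [sq_nonneg (ℓ wstar - ‖wstar‖ ^ 2), sq_nonneg t]
  -- key bound: μ(w) ≤ ‖wstar‖
  have hmu : ∀ w ∈ s, w ≠ 0 → ℓ w / ‖w‖ ≤ ‖wstar‖ := by
    intro w hw hw0
    have hnw : 0 < ‖w‖ := norm_pos_iff.mpr hw0
    by_cases hℓw : ℓ w ≤ 0
    · exact le_trans (div_nonpos_of_nonpos_of_nonneg hℓw (norm_nonneg w)) (le_of_lt hNs)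
    · push_neg at hℓw
      set t : ℝ := ℓ w / ‖w‖ ^ 2 with htdef
      have ht : 0 < t := div_pos hℓw (by positivity)
      have ht' : t * ‖w‖ ^ 2 = ℓ w := by rw [htdef]; field_simp
      have h := hwstar_max (t • w) (hs_cone w hw t ht)
      rw [hℓ_hom t ht, norm_smul, Real.norm_eq_abs, abs_of_pos ht, mul_pow, hL] at h
      rw [div_le_iff₀ hnw]
      nlinarith [mul_pos hNs hnw, mul_pos hℓw hnw, sq_nonneg (ℓ w - ‖wstar‖ * ‖w‖)]
  -- value of μ at normalized wstar
  have hc : 0 < ‖wstar‖⁻¹ := inv_pos.mpr hNs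
  have hval : ℓ (‖wstar‖⁻¹ • wstar) / ‖‖wstar‖⁻¹ • wstar‖ = ‖wstar‖ := by
    rw [hℓ_hom _ hc, norm_smul, Real.norm_eq_abs, abs_of_pos hc, hL]
    field_simp
  refine ⟨⟨hs_cone wstar hwstar_mem _ hc, smul_ne_zero (ne_of_gt hc) hne, ?_⟩, ?_⟩
  · intro w hw hw0
    rw [hval]
    exact hmu w hw hw0
  · intro w hw hw0 hmax
    have hnw : 0 < ‖w‖ := norm_pos_iff.mpr hw0
    have h1 : ‖wstar‖ ≤ ℓ w / ‖w‖ := by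
      have := hmax wstar hwstar_mem hne
      rw [hL] at this
      calc ‖wstar‖ = ‖wstar‖ ^ 2 / ‖wstar‖ := by field_simp [pow_two]
        _ ≤ ℓ w / ‖w‖ := this
    have heqμ : ℓ w = ‖wstar‖ * ‖w‖ := by
      have h2 := hmu w hw hw0
      have : ℓ w / ‖w‖ = ‖wstar‖ := le_antisymm h2 h1
      field_simp at this
      linarith [this]
    have hℓw : 0 < ℓ w := by rw [heqμ]; positivity
    set t : ℝ := ℓ w / ‖w‖ ^ 2 with htdef
    have ht : 0 < t := div_pos hℓw (by positivity)
    have ht' : t * ‖w‖ ^ 2 = ℓ w := by rw [htdef]; field_simp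
    have hFtw : ℓ (t • w) - (1 / 2) * ‖t • w‖ ^ 2 = ℓ wstar - (1 / 2) * ‖wstar‖ ^ 2 := by
      rw [hℓ_hom t ht, norm_smul, Real.norm_eq_abs, abs_of_pos ht, mul_pow, hL]
      have h3 : t * ‖w‖ ^ 2 = ‖wstar‖ * ‖w‖ := by rw [ht', heqμ]
      have h4 : t * ‖w‖ = ‖wstar‖ := by
        have := mul_right_cancel₀ (ne_of_gt hnw) (by rw [pow_two] at h3; linarith [h3] : t * ‖w‖ * ‖w‖ = ‖wstar‖ * ‖w‖)
        exact this
      rw [heqμ, ← h4]; ring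
    have heq : t • w = wstar := by
      apply hwstar_uniq (t • w) (hs_cone w hw t ht)
      intro v hv
      rw [hFtw]
      exact hwstar_max v hv
    exact ⟨t⁻¹, inv_pos.mpr ht, by
      rw [← heq, smul_smul, inv_mul_cancel₀ (ne_of_gt ht), one_smul]⟩
end

section
/- Let W be a finite-dimensional real inner product space, and let Σ be a finite set of vectors in W. For parameters δ = (δ₁, δ₂) ∈ ℝ², define ℓ_δ(w) = ⟨v₀, w⟩ + δ₁·min_{u∈Σ₁}⟨u,w⟩ + δ₂·min_{u∈Σ₂}⟨u,w⟩ where v₀ ∈ W is fixed and Σ₁, Σ₂ ⊆ Σ are fixed nonempty finite subsets. Let w*_δ be the unique maximizer of ℓ_δ(w) − ½‖w‖² over W. Then there exists a constant c > 0 (depending only on Σ) such that for all δ, γ ∈ ℝ²_{≥0}, one has ‖w*_δ − w*_γ‖ ≤ c·|δ − γ|₁, where |·|₁ is the L¹ norm on ℝ². -/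
/-!
Writing `F_δ = ℓ_δ - ½‖·‖²`, each `F_δ` is `1`-strongly concave because `ℓ_δ` is concave for
`δ ≥ 0`, so it falls off quadratically from its maximizer. Adding the two resulting bounds at
`a = w*_δ` and `b = w*_γ` gives `½‖a - b‖² ≤ (ℓ_δ - ℓ_γ)(a) - (ℓ_δ - ℓ_γ)(b)`, and
`ℓ_δ - ℓ_γ = (δ₁ - γ₁) min_{Σ₁}⟪u, ·⟫ + (δ₂ - γ₂) min_{Σ₂}⟪u, ·⟫` is Lipschitz with constant
`max_Σ ‖u‖ · |δ - γ|₁`.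
-/

open RealInnerProductSpace Set

section NormedSpace

variable {E : Type*} [NormedAddCommGroup E] [NormedSpace ℝ E]

/-- Only the midpoint of `a` and `x` is used, hence `m / 4` instead of the sharp `m / 2`. -/
lemma StrongConcaveOn.add_sq_le_of_isMaxOn {s : Set E} {m : ℝ} {f : E → ℝ}
    (hf : StrongConcaveOn s m f) {a x : E} (ha : a ∈ s) (hx : x ∈ s) (hmax : IsMaxOn f s a) :
    f x + m / 4 * ‖x - a‖ ^ 2 ≤ f a := by
  have hhalf : (0 : ℝ) ≤ 1 / 2 := by norm_num
  have hmid := hf.2 hx ha hhalf hhalf (by norm_num)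
  have hle : f ((1 / 2 : ℝ) • x + (1 / 2 : ℝ) • a) ≤ f a :=
    hmax (hf.1 hx ha hhalf hhalf (by norm_num))
  simp only [smul_eq_mul] at hmid
  linarith

lemma ConcaveOn.finset_inf' {ι : Type*} {s : Set E} {t : Finset ι} (ht : t.Nonempty)
    {f : ι → E → ℝ} (hf : ∀ i ∈ t, ConcaveOn ℝ s (f i)) :
    ConcaveOn ℝ s fun x => t.inf' ht fun i => f i x := by
  obtain ⟨i₀, hi₀⟩ := ht
  refine ⟨(hf i₀ hi₀).1, fun x hx y hy a b ha hb hab => Finset.le_inf' _ _ fun i hi => ?_⟩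
  calc a • t.inf' _ (fun j => f j x) + b • t.inf' _ (fun j => f j y)
      ≤ a • f i x + b • f i y := by
        gcongr <;> exact Finset.inf'_le _ hi
    _ ≤ f i (a • x + b • y) := (hf i hi).2 hx hy ha hb hab

end NormedSpace

section InnerProductSpace

variable {E : Type*} [NormedAddCommGroup E] [InnerProductSpace ℝ E]

lemma norm_sub_le_of_forall_sub_half_sq_le {f g : E → ℝ} (hf : ConcaveOn ℝ univ f)
    (hg : ConcaveOn ℝ univ g) {a b : E}
    (ha : ∀ w, f w - 1 / 2 * ‖w‖ ^ 2 ≤ f a - 1 / 2 * ‖a‖ ^ 2)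
    (hb : ∀ w, g w - 1 / 2 * ‖w‖ ^ 2 ≤ g b - 1 / 2 * ‖b‖ ^ 2) {K : ℝ} (hK₀ : 0 ≤ K)
    (hK : (f a - g a) - (f b - g b) ≤ K * ‖a - b‖) :
    ‖a - b‖ ≤ 2 * K := by
  have strong {h : E → ℝ} (hh : ConcaveOn ℝ univ h) :
      StrongConcaveOn univ 1 fun w => h w - 1 / 2 * ‖w‖ ^ 2 :=
    strongConcaveOn_iff_convex.2 (by simpa using hh)
  have hfa := (strong hf).add_sq_le_of_isMaxOn (mem_univ a) (mem_univ b)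
    (isMaxOn_univ_iff.2 ha)
  have hgb := (strong hg).add_sq_le_of_isMaxOn (mem_univ b) (mem_univ a)
    (isMaxOn_univ_iff.2 hb)
  rw [norm_sub_rev] at hfa
  nlinarith [norm_nonneg (a - b)]

lemma concaveOn_finset_inf'_inner (T : Finset E) (hT : T.Nonempty) :
    ConcaveOn ℝ univ fun w => T.inf' hT fun u => ⟪u, w⟫ :=
  ConcaveOn.finset_inf' hT fun u _ => (innerₛₗ ℝ u).concaveOn convex_univ

lemma finset_inf'_inner_le_add {T : Finset E} (hT : T.Nonempty) {M : ℝ}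
    (hM : ∀ u ∈ T, ‖u‖ ≤ M) (a b : E) :
    T.inf' hT (fun u => ⟪u, a⟫) ≤ T.inf' hT (fun u => ⟪u, b⟫) + M * ‖a - b‖ := by
  obtain ⟨u, hu, hub⟩ := T.exists_mem_eq_inf' hT fun u => ⟪u, b⟫
  calc T.inf' hT (fun u => ⟪u, a⟫) ≤ ⟪u, a⟫ := Finset.inf'_le _ hu
    _ = ⟪u, b⟫ + ⟪u, a - b⟫ := by rw [inner_sub_right]; ring
    _ ≤ ⟪u, b⟫ + ‖u‖ * ‖a - b‖ := by gcongr; exact real_inner_le_norm u (a - b)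
    _ ≤ T.inf' hT (fun u => ⟪u, b⟫) + M * ‖a - b‖ := by rw [hub]; gcongr; exact hM u hu

lemma abs_finset_inf'_inner_sub_le {T : Finset E} (hT : T.Nonempty) {M : ℝ}
    (hM : ∀ u ∈ T, ‖u‖ ≤ M) (a b : E) :
    |T.inf' hT (fun u => ⟪u, a⟫) - T.inf' hT (fun u => ⟪u, b⟫)| ≤ M * ‖a - b‖ := by
  have hab := finset_inf'_inner_le_add hT hM a b
  have hba := finset_inf'_inner_le_add hT hM b a
  rw [norm_sub_rev] at hba
  exact abs_sub_le_iff.2 ⟨by linarith, by linarith⟩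

end InnerProductSpace

theorem stmt6_general {W : Type*} [NormedAddCommGroup W] [InnerProductSpace ℝ W]
    (S : Finset W) :
    ∃ c : ℝ, 0 < c ∧
      ∀ (v₀ : W) (S₁ S₂ : Finset W) (h₁ : S₁.Nonempty) (h₂ : S₂.Nonempty),
        S₁ ⊆ S → S₂ ⊆ S →
        ∀ wstar : ℝ × ℝ → W,
          (∀ δ : ℝ × ℝ, 0 ≤ δ.1 → 0 ≤ δ.2 →
            (∀ w : W,
              (⟪v₀, w⟫ + δ.1 * S₁.inf' h₁ (fun u => ⟪u, w⟫)
                  + δ.2 * S₂.inf' h₂ (fun u => ⟪u, w⟫)) - (1 / 2) * ‖w‖ ^ 2 ≤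
              (⟪v₀, wstar δ⟫ + δ.1 * S₁.inf' h₁ (fun u => ⟪u, wstar δ⟫)
                  + δ.2 * S₂.inf' h₂ (fun u => ⟪u, wstar δ⟫))
                - (1 / 2) * ‖wstar δ‖ ^ 2)) →
          ∀ δ γ : ℝ × ℝ, 0 ≤ δ.1 → 0 ≤ δ.2 → 0 ≤ γ.1 → 0 ≤ γ.2 →
            ‖wstar δ - wstar γ‖ ≤ c * (|δ.1 - γ.1| + |δ.2 - γ.2|) := by
  -- A crude bound on `max_Σ ‖u‖`; the `1 +` keeps `c` positive when `S ⊆ {0}`.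
  set M : ℝ := 1 + ∑ u ∈ S, ‖u‖
  have hM : ∀ u ∈ S, ‖u‖ ≤ M := fun u hu =>
    (Finset.single_le_sum (fun v _ => norm_nonneg v) hu).trans (le_add_of_nonneg_left zero_le_one)
  refine ⟨2 * M, by positivity, ?_⟩
  intro v₀ S₁ S₂ h₁ h₂ hS₁ hS₂ wstar hmax δ γ hδ₁ hδ₂ hγ₁ hγ₂
  let g₁ (w : W) : ℝ := S₁.inf' h₁ fun u => ⟪u, w⟫
  let g₂ (w : W) : ℝ := S₂.inf' h₂ fun u => ⟪u, w⟫
  let ℓ (d : ℝ × ℝ) (w : W) : ℝ := ⟪v₀, w⟫ + d.1 * g₁ w + d.2 * g₂ w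
  have hℓ {d : ℝ × ℝ} (hd₁ : 0 ≤ d.1) (hd₂ : 0 ≤ d.2) : ConcaveOn ℝ univ (ℓ d) :=
    (((innerₛₗ ℝ v₀).concaveOn convex_univ).add
      ((concaveOn_finset_inf'_inner S₁ h₁).smul hd₁)).add
      ((concaveOn_finset_inf'_inner S₂ h₂).smul hd₂)
  have hg₁ := abs_finset_inf'_inner_sub_le h₁ (fun u hu => hM u (hS₁ hu)) (wstar δ) (wstar γ)
  have hg₂ := abs_finset_inf'_inner_sub_le h₂ (fun u hu => hM u (hS₂ hu)) (wstar δ) (wstar γ)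
  rw [mul_assoc]
  refine norm_sub_le_of_forall_sub_half_sq_le (hℓ hδ₁ hδ₂) (hℓ hγ₁ hγ₂)
    (hmax δ hδ₁ hδ₂) (hmax γ hγ₁ hγ₂) (by positivity) ?_
  calc ℓ δ (wstar δ) - ℓ γ (wstar δ) - (ℓ δ (wstar γ) - ℓ γ (wstar γ))
      = (δ.1 - γ.1) * (g₁ (wstar δ) - g₁ (wstar γ))
        + (δ.2 - γ.2) * (g₂ (wstar δ) - g₂ (wstar γ)) := by ring
    _ ≤ |δ.1 - γ.1| * |g₁ (wstar δ) - g₁ (wstar γ)|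
        + |δ.2 - γ.2| * |g₂ (wstar δ) - g₂ (wstar γ)| := by
      rw [← abs_mul, ← abs_mul]
      exact add_le_add (le_abs_self _) (le_abs_self _)
    _ ≤ |δ.1 - γ.1| * (M * ‖wstar δ - wstar γ‖) + |δ.2 - γ.2| * (M * ‖wstar δ - wstar γ‖) := by
      gcongr
    _ = M * (|δ.1 - γ.1| + |δ.2 - γ.2|) * ‖wstar δ - wstar γ‖ := by ring

/-- Let `Σ` be a finite set of vectors in a finite-dimensional real inner
product space `W`. For parameters `δ = (δ₁, δ₂)` define
`ℓ_δ(w) = ⟪v₀, w⟫ + δ₁·min_{u∈Σ₁}⟪u,w⟫ + δ₂·min_{u∈Σ₂}⟪u,w⟫` for fixed `v₀ ∈ W` and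
fixed nonempty subsets `Σ₁, Σ₂ ⊆ Σ`, and let `w*_δ` be the unique maximizer of
`ℓ_δ(w) − ½‖w‖²` over `W`. Then there is `c > 0` depending only on `Σ` such that for
all `δ, γ ∈ ℝ²_{≥0}` one has `‖w*_δ − w*_γ‖ ≤ c·|δ − γ|₁`. -/
theorem stmt6 {W : Type*} [NormedAddCommGroup W] [InnerProductSpace ℝ W]
    [FiniteDimensional ℝ W] (S : Finset W) :
    ∃ c : ℝ, 0 < c ∧
      ∀ (v₀ : W) (S₁ S₂ : Finset W) (h₁ : S₁.Nonempty) (h₂ : S₂.Nonempty),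
        S₁ ⊆ S → S₂ ⊆ S →
        ∀ wstar : ℝ × ℝ → W,
          (∀ δ : ℝ × ℝ, 0 ≤ δ.1 → 0 ≤ δ.2 →
            (∀ w : W,
              (⟪v₀, w⟫ + δ.1 * S₁.inf' h₁ (fun u => ⟪u, w⟫)
                  + δ.2 * S₂.inf' h₂ (fun u => ⟪u, w⟫)) - (1 / 2) * ‖w‖ ^ 2 ≤
              (⟪v₀, wstar δ⟫ + δ.1 * S₁.inf' h₁ (fun u => ⟪u, wstar δ⟫)
                  + δ.2 * S₂.inf' h₂ (fun u => ⟪u, wstar δ⟫))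
                - (1 / 2) * ‖wstar δ‖ ^ 2)) →
          ∀ δ γ : ℝ × ℝ, 0 ≤ δ.1 → 0 ≤ δ.2 → 0 ≤ γ.1 → 0 ≤ γ.2 →
            ‖wstar δ - wstar γ‖ ≤ c * (|δ.1 - γ.1| + |δ.2 - γ.2|) :=
  stmt6_general S
end

section
/- Let V be a finite-dimensional real inner product space, with simple roots α₁,…,αᵣ ∈ V* and dual fundamental coweights ω₁^∨,…,ωᵣ^∨ ∈ V satisfying αᵢ(ωⱼ^∨) = δᵢⱼ, and suppose (αᵢ^†, αⱼ^†) ≤ 0 for i ≠ j where αᵢ^† is the vector dual to αᵢ under the inner product. Then (ωᵢ^∨, ωⱼ^∨) ≥ 0 for all i, j. -/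
open RealInnerProductSpace

/-- Let `V` be a finite-dimensional real inner product space with
simple roots `α₁,…,αᵣ ∈ V*` (forming a basis of `V*`, equivalently their dual
vectors `a i` span `V`) and dual fundamental coweights `ω₁^∨,…,ωᵣ^∨ ∈ V`
satisfying `αᵢ(ωⱼ^∨) = δᵢⱼ`.  If the dual vectors `αᵢ^†` satisfy
`(αᵢ^†, αⱼ^†) ≤ 0` for `i ≠ j`, then `(ωᵢ^∨, ωⱼ^∨) ≥ 0` for all `i, j`. -/
theorem stmt15 {V : Type*} [NormedAddCommGroup V] [InnerProductSpace ℝ V]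
    [FiniteDimensional ℝ V] (r : ℕ) (α : Fin r → (V →ₗ[ℝ] ℝ)) (a ω : Fin r → V)
    (hdualvec : ∀ (i : Fin r) (v : V), α i v = ⟪a i, v⟫)
    (hspan : Submodule.span ℝ (Set.range a) = ⊤)
    (hdual : ∀ i j : Fin r, α i (ω j) = if i = j then 1 else 0)
    (hoffdiag : ∀ i j : Fin r, i ≠ j → ⟪a i, a j⟫ ≤ 0) :
    ∀ i j : Fin r, 0 ≤ ⟪ω i, ω j⟫ := by
  have hin : ∀ i j : Fin r, ⟪a i, ω j⟫ = if i = j then (1:ℝ) else 0 := fun i j => by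
    rw [← hdualvec]; exact hdual i j
  have hli : LinearIndependent ℝ a := by
    rw [Fintype.linearIndependent_iff]
    intro g hg j
    have h := congrArg (fun v => ⟪v, ω j⟫) hg
    simpa [sum_inner, inner_smul_left, hin, Finset.sum_ite_eq] using h
  intro i j
  let b : Module.Basis (Fin r) ℝ V := Module.Basis.mk hli (by rw [hspan])
  set c : Fin r → ℝ := fun k => b.repr (ω i) k with hcdef
  have hrep : ω i = ∑ k, c k • a k := by
    have h := b.sum_repr (ω i)
    simp only [Module.Basis.coe_mk, b] at h
    exact h.symm
  have hc : ⟪ω i, ω j⟫ = c j := by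
    conv_lhs => rw [hrep]
    simp [sum_inner, inner_smul_left, hin, Finset.sum_ite_eq]
  suffices h : ∀ k, 0 ≤ c k by rw [hc]; exact h j
  set S : Finset (Fin r) := Finset.univ.filter (fun k => c k < 0) with hS
  set n : V := ∑ k ∈ S, (-(c k)) • a k with hn
  set p : V := ∑ k ∈ Sᶜ, c k • a k with hp
  have hωi : ω i = p - n := by
    rw [hrep, ← Finset.sum_compl_add_sum S (fun k => c k • a k)]
    simp [p, n, neg_smul, Finset.sum_neg_distrib, sub_eq_add_neg]
  have hpn : ⟪p, n⟫ ≤ 0 := by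
    rw [hp, hn, sum_inner]
    apply Finset.sum_nonpos
    intro k hk
    rw [inner_sum]
    apply Finset.sum_nonpos
    intro m hm
    have hk' : ¬ c k < 0 := by simpa [S] using hk
    have hm' : c m < 0 := by simpa [S] using hm
    have hkm : k ≠ m := fun h => hk' (h ▸ hm')
    have h1 := hoffdiag k m hkm
    have hk0 : (0:ℝ) ≤ c k := not_lt.mp hk'
    rw [real_inner_smul_left, real_inner_smul_right, ← mul_assoc]
    exact mul_nonpos_of_nonneg_of_nonpos (mul_nonneg hk0 (by linarith)) h1
  have hωn : 0 ≤ ⟪ω i, n⟫ := by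
    rw [hn, inner_sum]
    apply Finset.sum_nonneg
    intro m hm
    have hm' : c m < 0 := by simpa [S] using hm
    rw [real_inner_smul_right, real_inner_comm, hin]
    have : (0:ℝ) ≤ if m = i then 1 else 0 := by positivity
    nlinarith
  have hnn : ⟪n, n⟫ ≤ 0 := by
    have h1 : ⟪n, n⟫ = ⟪p, n⟫ - ⟪ω i, n⟫ := by
      rw [hωi]; rw [inner_sub_left]; ring
    linarith [h1, hpn, hωn]
  have hn0 : n = 0 := by
    have := real_inner_self_nonneg (x := n)
    have h0 : ⟪n, n⟫ = 0 := le_antisymm hnn this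
    exact inner_self_eq_zero.mp h0
  intro k
  by_contra hck
  push_neg at hck
  have hkS : k ∈ S := by simp [S, hck]
  have : ⟪n, ω k⟫ = -(c k) := by
    rw [hn, sum_inner]
    rw [Finset.sum_eq_single k]
    · rw [real_inner_smul_left, hin]; simp
    · intro m hm hmk
      rw [real_inner_smul_left, hin]
      simp [hmk]
    · intro h; exact absurd hkS h
  rw [hn0] at this
  simp at this
  linarith
end
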